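/- arXiv:1111.5979 — 4 statements merged into one kernel-verified Lean document; each statement's English description precedes it below -/
import Mathlib

section
/- Let D be a finite set of points in ℝ² whose pairwise Euclidean distances are all at least 2, let c, c' ∈ D with dist(c,c') = 2, let m = (c + c')/2, and let b = (lift(c) + lift(c'))/2. Define the affine functional h : ℝ³ → ℝ by h(p₁,p₂,p₃) = p₃ − 2⟨m,(p₁,p₂)⟩ + ‖m‖² − 1. Then h(lift(c)) = h(lift(c')) = h(b) = 0, and h(lift(d)) > 0 for every d ∈ D with d ≠ c and d ≠ c'. -/
/-- The standard lifting map to the elliptic paraboloid: `(x₁, x₂) ↦ (x₁, x₂, x₁² + x₂²)`. -/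
noncomputable def lift (x : EuclideanSpace ℝ (Fin 2)) : EuclideanSpace ℝ (Fin 3) :=
  (WithLp.equiv 2 (Fin 3 → ℝ)).symm ![x 0, x 1, x 0 ^ 2 + x 1 ^ 2]

/-!
The lifting map sends the circle of centre `m` and radius `r` into a plane, and a point `x` lifts
above that plane exactly when `dist x m > r`: the height of `lift x` over it is
`dist x m ^ 2 - r ^ 2`. For touching `c`, `c'` the unit circle about their midpoint passes through
both, so the plane contains `lift c`, `lift c'` and hence their midpoint `b`. Any other centre `d`
is at distance at least `2` from `c` and `c'`, so by Apollonius' theorem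
`dist d m ^ 2 = (dist d c ^ 2 + dist d c' ^ 2) / 2 - 1 ≥ 3`, and `lift d` lies strictly above.
-/

/-- The zero set of this affine functional is the plane containing the lift of the circle of
centre `m` and radius `r`. -/
noncomputable def liftedCircleFunctional (m : EuclideanSpace ℝ (Fin 2)) (r : ℝ)
    (p : EuclideanSpace ℝ (Fin 3)) : ℝ :=
  p 2 - 2 * inner ℝ m ((WithLp.equiv 2 (Fin 2 → ℝ)).symm ![p 0, p 1]) + ‖m‖ ^ 2 - r ^ 2

lemma inner_equiv_symm_fin_two (m : EuclideanSpace ℝ (Fin 2)) (x y : ℝ) :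
    inner ℝ m ((WithLp.equiv 2 (Fin 2 → ℝ)).symm ![x, y]) = m 0 * x + m 1 * y := by
  simp [PiLp.inner_apply, Fin.sum_univ_two, mul_comm]

lemma liftedCircleFunctional_lift (m x : EuclideanSpace ℝ (Fin 2)) (r : ℝ) :
    liftedCircleFunctional m r (lift x) = dist x m ^ 2 - r ^ 2 := by
  rw [liftedCircleFunctional, inner_equiv_symm_fin_two, dist_eq_norm,
    EuclideanSpace.real_norm_sq_eq, EuclideanSpace.real_norm_sq_eq]
  simp only [lift, Fin.sum_univ_two, PiLp.sub_apply, WithLp.equiv_symm_apply, PiLp.toLp_apply,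
    Matrix.cons_val, Matrix.cons_val_zero, Matrix.cons_val_one]
  ring

lemma liftedCircleFunctional_smul_add (m : EuclideanSpace ℝ (Fin 2)) (r : ℝ)
    (p q : EuclideanSpace ℝ (Fin 3)) :
    liftedCircleFunctional m r ((1 / 2 : ℝ) • (p + q)) =
      (liftedCircleFunctional m r p + liftedCircleFunctional m r q) / 2 := by
  simp only [liftedCircleFunctional, inner_equiv_symm_fin_two, PiLp.smul_apply, PiLp.add_apply,
    smul_eq_mul]
  ring

lemma three_le_dist_midpoint_sq {V P : Type*} [NormedAddCommGroup V] [InnerProductSpace ℝ V]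
    [MetricSpace P] [NormedAddTorsor V P] {c c' d : P} (hc : 2 ≤ dist d c)
    (hc' : 2 ≤ dist d c') (hcc' : dist c c' ≤ 2) : 3 ≤ dist d (midpoint ℝ c c') ^ 2 := by
  have := EuclideanGeometry.dist_sq_add_dist_sq_eq_two_mul_dist_midpoint_sq_add_half_dist_sq d c c'
  nlinarith [dist_nonneg (x := c) (y := c')]

theorem blocking_hyperplane_general (D : Set (EuclideanSpace ℝ (Fin 2)))
    (hsep : ∀ p ∈ D, ∀ q ∈ D, p ≠ q → 2 ≤ dist p q)
    (c : EuclideanSpace ℝ (Fin 2)) (hc : c ∈ D)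
    (c' : EuclideanSpace ℝ (Fin 2)) (hc' : c' ∈ D) (htouch : dist c c' = 2)
    (m : EuclideanSpace ℝ (Fin 2)) (hm : m = (1 / 2 : ℝ) • (c + c'))
    (b : EuclideanSpace ℝ (Fin 3)) (hb : b = (1 / 2 : ℝ) • (lift c + lift c'))
    (h : EuclideanSpace ℝ (Fin 3) → ℝ)
    (hh : ∀ p, h p =
      p 2 - 2 * (inner ℝ m ((WithLp.equiv 2 (Fin 2 → ℝ)).symm ![p 0, p 1]) : ℝ) + ‖m‖ ^ 2 - 1) :
    h (lift c) = 0 ∧ h (lift c') = 0 ∧ h b = 0 ∧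
      ∀ d ∈ D, d ≠ c → d ≠ c' → 0 < h (lift d) := by
  have hf : h = liftedCircleFunctional m 1 :=
    funext fun p => by rw [hh, liftedCircleFunctional, one_pow]
  have hmid : m = midpoint ℝ c c' := by rw [hm, midpoint_eq_smul_add]; norm_num
  have hcm : dist c m = 1 := by rw [hmid, dist_left_midpoint, htouch]; norm_num
  have hc'm : dist c' m = 1 := by rw [hmid, dist_right_midpoint, htouch]; norm_num
  have hlc : h (lift c) = 0 := by rw [hf, liftedCircleFunctional_lift, hcm]; norm_num
  have hlc' : h (lift c') = 0 := by rw [hf, liftedCircleFunctional_lift, hc'm]; norm_num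
  refine ⟨hlc, hlc', ?_, fun d hd hdc hdc' => ?_⟩
  · rw [hb, hf, liftedCircleFunctional_smul_add, ← hf, hlc, hlc']; norm_num
  · have := three_le_dist_midpoint_sq (hsep d hd c hc hdc) (hsep d hd c' hc' hdc') htouch.le
    rw [hf, liftedCircleFunctional_lift, hmid]
    linarith

/-- Let `D ⊆ ℝ²` be finite with pairwise distances at least `2`, let
`c, c' ∈ D` with `dist c c' = 2`, let `m = (c + c')/2` and `b = (lift c + lift c')/2`.
With `h(p₁,p₂,p₃) = p₃ − 2⟨m,(p₁,p₂)⟩ + ‖m‖² − 1`, we have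
`h (lift c) = h (lift c') = h b = 0`, and `h (lift d) > 0` for every `d ∈ D` other than
`c` and `c'`. -/
theorem blocking_hyperplane (D : Set (EuclideanSpace ℝ (Fin 2)))
    (hD : D.Finite) (hsep : ∀ p ∈ D, ∀ q ∈ D, p ≠ q → 2 ≤ dist p q)
    (c : EuclideanSpace ℝ (Fin 2)) (hc : c ∈ D)
    (c' : EuclideanSpace ℝ (Fin 2)) (hc' : c' ∈ D) (htouch : dist c c' = 2)
    (m : EuclideanSpace ℝ (Fin 2)) (hm : m = (1 / 2 : ℝ) • (c + c'))
    (b : EuclideanSpace ℝ (Fin 3)) (hb : b = (1 / 2 : ℝ) • (lift c + lift c'))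
    (h : EuclideanSpace ℝ (Fin 3) → ℝ)
    (hh : ∀ p, h p =
      p 2 - 2 * (inner ℝ m ((WithLp.equiv 2 (Fin 2 → ℝ)).symm ![p 0, p 1]) : ℝ) + ‖m‖ ^ 2 - 1) :
    h (lift c) = 0 ∧ h (lift c') = 0 ∧ h b = 0 ∧
      ∀ d ∈ D, d ≠ c → d ≠ c' → 0 < h (lift d) :=
  blocking_hyperplane_general D hsep c hc c' hc' htouch m hm b hb h hh
end

section
/- Let D be a finite set of points in ℝ² whose pairwise Euclidean distances are all at least 2, and let c, c' ∈ D with dist(c,c') = 2. Let b = (lift(c) + lift(c'))/2 be the corresponding blocking point. Then for every subset Q ⊆ lift(D), the point b lies in the convex hull of Q if and only if both lift(c) ∈ Q and lift(c') ∈ Q. -/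
/-!
The affine functional `f y = y₂ - (c₀ + c'₀) y₀ - (c₁ + c'₁) y₁ + ⟪c, c'⟫` satisfies
`f (lift p) = ⟪p - c, p - c'⟫`, the power of `p` with respect to the circle with diameter `cc'`.
That circle has radius `1`, so every point of `D` other than `c, c'` lies outside it and `f` is
positive there, while `f` vanishes at `lift c`, `lift c'` and their midpoint `b`. Hence the plane
`f = 0` supports `lift D` and touches it only at `lift c, lift c'`: any convex combination of
points of `Q` equal to `b` uses only these two points, and then it must use both.
-/

open scoped InnerProductSpace

section ConvexHull

variable {𝕜 E : Type*} [Field 𝕜] [LinearOrder 𝕜] [IsStrictOrderedRing 𝕜]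
  [AddCommGroup E] [Module 𝕜 E]

theorem AffineMap.convexHull_inter_preimage_zero_subset (f : E →ᵃ[𝕜] 𝕜) {s : Set E}
    (hf : ∀ y ∈ s, 0 ≤ f y) :
    convexHull 𝕜 s ∩ f ⁻¹' {0} ⊆ convexHull 𝕜 (s ∩ f ⁻¹' {0}) := by
  set F := convexHull 𝕜 (s ∩ f ⁻¹' {0})
  have hF : ∀ y ∈ F, f y = 0 :=
    convexHull_min Set.inter_subset_right ((convex_singleton 0).affine_preimage f)
  have hconv : Convex 𝕜 ({y | 0 < f y} ∪ F) := by
    refine convex_iff_forall_pos.2 fun x hx y hy a b ha hb hab => ?_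
    rw [Set.mem_union, Set.mem_ofPred_eq, Convex.combo_affine_apply hab, smul_eq_mul, smul_eq_mul]
    rcases hx with hx | hx <;> rcases hy with hy | hy
    · exact Or.inl (add_pos (mul_pos ha hx) (mul_pos hb hy))
    · exact Or.inl (by rw [hF y hy, mul_zero, add_zero]; exact mul_pos ha hx)
    · exact Or.inl (by rw [hF x hx, mul_zero, zero_add]; exact mul_pos hb hy)
    · exact Or.inr (convex_convexHull 𝕜 _ hx hy ha.le hb.le hab)
  rintro x ⟨hx, hx0⟩
  have hs : s ⊆ {y | 0 < f y} ∪ F := fun y hy =>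
    (hf y hy).lt_or_eq.imp (fun h => h) fun h => subset_convexHull 𝕜 _ ⟨hy, h.symm⟩
  rcases convexHull_min hs hconv hx with h | h
  · exact absurd hx0 h.ne'
  · exact h

theorem midpoint_mem_convexHull_of_subset_pair {x y : E} {S : Set E}
    (hxy : x ≠ y) (hS : S ⊆ {x, y}) (h : midpoint 𝕜 x y ∈ convexHull 𝕜 S) : x ∈ S ∧ y ∈ S := by
  constructor
  · by_contra hx
    rw [Set.subset_insert_iff_of_notMem hx] at hS
    have := convexHull_mono hS h
    rw [convexHull_singleton, Set.mem_singleton_iff, midpoint_eq_right_iff] at this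
    exact hxy this
  · by_contra hy
    rw [Set.pair_comm, Set.subset_insert_iff_of_notMem hy] at hS
    have := convexHull_mono hS h
    rw [convexHull_singleton, Set.mem_singleton_iff, midpoint_eq_left_iff] at this
    exact hxy this

end ConvexHull

theorem inner_sub_sub_pos_of_dist_le {F : Type*} [NormedAddCommGroup F] [InnerProductSpace ℝ F]
    {p c c' : F} (h : dist c c' ≤ dist p c) (hp : p ≠ c') : 0 < ⟪p - c, p - c'⟫_ℝ := by
  have hpolar := norm_sub_sq_real (p - c) (p - c')
  rw [sub_sub_sub_cancel_left, ← dist_eq_norm, ← dist_eq_norm, ← dist_eq_norm,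
    dist_comm c'] at hpolar
  have hdist : 0 < dist p c' := dist_pos.2 hp
  nlinarith [dist_nonneg (x := c) (y := c')]

theorem lift_injective : Function.Injective lift := by
  intro p q h
  ext i
  fin_cases i
  · exact congrArg (· 0) h
  · exact congrArg (· 1) h

noncomputable def diametralPower (c c' : EuclideanSpace ℝ (Fin 2)) :
    EuclideanSpace ℝ (Fin 3) →ᵃ[ℝ] ℝ :=
  (EuclideanSpace.proj 2 - (c 0 + c' 0) • EuclideanSpace.proj 0
      - (c 1 + c' 1) • EuclideanSpace.proj 1 : EuclideanSpace ℝ (Fin 3) →L[ℝ] ℝ).toAffineMap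
    + AffineMap.const ℝ _ ⟪c, c'⟫_ℝ

theorem diametralPower_lift (c c' p : EuclideanSpace ℝ (Fin 2)) :
    diametralPower c c' (lift p) = ⟪p - c, p - c'⟫_ℝ := by
  simp [diametralPower, lift, PiLp.inner_apply, Fin.sum_univ_two]
  ring

theorem blocking_point_encoding_general (D : Set (EuclideanSpace ℝ (Fin 2)))
    (hsep : ∀ p ∈ D, ∀ q ∈ D, p ≠ q → 2 ≤ dist p q)
    (c : EuclideanSpace ℝ (Fin 2)) (hc : c ∈ D)
    (c' : EuclideanSpace ℝ (Fin 2)) (htouch : dist c c' = 2)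
    (b : EuclideanSpace ℝ (Fin 3)) (hb : b = (1 / 2 : ℝ) • (lift c + lift c')) :
    ∀ Q ⊆ lift '' D, (b ∈ convexHull ℝ Q ↔ lift c ∈ Q ∧ lift c' ∈ Q) := by
  intro Q hQ
  set f := diametralPower c c'
  have hmid : b = midpoint ℝ (lift c) (lift c') := by
    rw [hb, midpoint_eq_smul_add]; norm_num
  have hfb : f b = 0 := by
    simp [f, hmid, AffineMap.map_midpoint, diametralPower_lift]
  have hcases : ∀ y ∈ Q, y = lift c ∨ y = lift c' ∨ 0 < f y := by
    rintro _ hy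
    obtain ⟨p, hp, rfl⟩ := hQ hy
    by_cases h : p = c; · exact Or.inl (congrArg lift h)
    by_cases h' : p = c'; · exact Or.inr (Or.inl (congrArg lift h'))
    rw [diametralPower_lift]
    exact Or.inr (Or.inr (inner_sub_sub_pos_of_dist_le (htouch ▸ hsep p hp c hc h) h'))
  have hf_nonneg : ∀ y ∈ Q, 0 ≤ f y := fun y hy => by
    rcases hcases y hy with rfl | rfl | h
    · simp [f, diametralPower_lift]
    · simp [f, diametralPower_lift]
    · exact h.le
  have hf_zero : Q ∩ f ⁻¹' {0} ⊆ {lift c, lift c'} := fun y ⟨hy, hy0⟩ => by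
    rcases hcases y hy with rfl | rfl | h
    · exact Or.inl rfl
    · exact Or.inr rfl
    · exact absurd hy0 h.ne'
  constructor
  · intro hbQ
    have hcc' : c ≠ c' := by rintro rfl; norm_num at htouch
    have hbZ := f.convexHull_inter_preimage_zero_subset hf_nonneg ⟨hbQ, hfb⟩
    rw [hmid] at hbZ
    obtain ⟨h, h'⟩ := midpoint_mem_convexHull_of_subset_pair (lift_injective.ne hcc') hf_zero hbZ
    exact ⟨h.1, h'.1⟩
  · rintro ⟨h, h'⟩
    rw [hmid]
    exact segment_subset_convexHull h h' (midpoint_mem_segment _ _)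

/-- Let `D ⊆ ℝ²` be finite with pairwise distances at least `2`, let
`c, c' ∈ D` with `dist c c' = 2`, and let `b = (lift c + lift c')/2` be the blocking
point. Then for every `Q ⊆ lift '' D`, the point `b` lies in the convex hull of `Q`
iff both `lift c ∈ Q` and `lift c' ∈ Q`. -/
theorem blocking_point_encoding (D : Set (EuclideanSpace ℝ (Fin 2)))
    (hD : D.Finite) (hsep : ∀ p ∈ D, ∀ q ∈ D, p ≠ q → 2 ≤ dist p q)
    (c : EuclideanSpace ℝ (Fin 2)) (hc : c ∈ D)
    (c' : EuclideanSpace ℝ (Fin 2)) (hc' : c' ∈ D) (htouch : dist c c' = 2)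
    (b : EuclideanSpace ℝ (Fin 3)) (hb : b = (1 / 2 : ℝ) • (lift c + lift c')) :
    ∀ Q ⊆ lift '' D, (b ∈ convexHull ℝ Q ↔ lift c ∈ Q ∧ lift c' ∈ Q) :=
  blocking_point_encoding_general D hsep c hc c' htouch b hb
end

section
/- Let D be a finite set of points in ℝ² whose pairwise Euclidean distances are all at least 2, and let B = { (lift(c) + lift(c'))/2 : c, c' ∈ D, dist(c,c') = 2 } be the set of blocking points. Then B is in convex position: no blocking point lies in the convex hull of the remaining blocking points. -/
/-- The set of blocking points of `D`: midpoints `(lift c + lift c')/2` over all touching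
pairs `c, c' ∈ D` (i.e. pairs with `dist c c' = 2`). -/
noncomputable def blockers (D : Set (EuclideanSpace ℝ (Fin 2))) :
    Set (EuclideanSpace ℝ (Fin 3)) :=
  {b | ∃ c ∈ D, ∃ c' ∈ D, dist c c' = 2 ∧ b = (1 / 2 : ℝ) • (lift c + lift c')}

/-!
Every blocking point lies on the translated paraboloid `x₃ = x₁² + x₂² + 1`: for the midpoint `m`
of `lift c` and `lift c'` one has `m₃ = m₁² + m₂² + |c - c'|² / 4`, and touching means
`|c - c'| = 2`. Points of a paraboloid are in convex position, since all of them except `b` lie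
strictly above the tangent plane at `b`, an open half-space that misses `b`.
-/

def paraboloid (r : ℝ) : Set (EuclideanSpace ℝ (Fin 3)) :=
  {p | p 2 = p 0 ^ 2 + p 1 ^ 2 + r}

namespace paraboloid

/-- Up to an additive constant, the height of `p` above the tangent plane of the paraboloid at
`b`. -/
def tangentGap (b p : EuclideanSpace ℝ (Fin 3)) : ℝ :=
  p 2 - 2 * b 0 * p 0 - 2 * b 1 * p 1

lemma isLinearMap_tangentGap (b : EuclideanSpace ℝ (Fin 3)) : IsLinearMap ℝ (tangentGap b) :=
  ⟨fun p q => by simp only [tangentGap, PiLp.add_apply]; ring,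
   fun c p => by simp only [tangentGap, PiLp.smul_apply, smul_eq_mul]; ring⟩

variable {r : ℝ} {b p : EuclideanSpace ℝ (Fin 3)}

lemma tangentGap_sub (hb : b ∈ paraboloid r) (hp : p ∈ paraboloid r) :
    tangentGap b p - tangentGap b b = (p 0 - b 0) ^ 2 + (p 1 - b 1) ^ 2 := by
  simp only [paraboloid, Set.mem_ofPred_eq] at hb hp
  simp only [tangentGap, hb, hp]
  ring

lemma eq_of_coord_eq (hb : b ∈ paraboloid r) (hp : p ∈ paraboloid r)
    (h0 : p 0 = b 0) (h1 : p 1 = b 1) : p = b := by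
  have h2 : p 2 = b 2 := by rw [hp, hb, h0, h1]
  ext j
  fin_cases j <;> assumption

lemma tangentGap_lt (hb : b ∈ paraboloid r) (hp : p ∈ paraboloid r) (hpb : p ≠ b) :
    tangentGap b b < tangentGap b p := by
  have hsub := tangentGap_sub hb hp
  by_contra! hle
  have h0 : p 0 = b 0 := by nlinarith [sq_nonneg (p 0 - b 0), sq_nonneg (p 1 - b 1)]
  have h1 : p 1 = b 1 := by nlinarith [sq_nonneg (p 0 - b 0), sq_nonneg (p 1 - b 1)]
  exact hpb (eq_of_coord_eq hb hp h0 h1)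

theorem notMem_convexHull_diff_singleton {S : Set (EuclideanSpace ℝ (Fin 3))}
    (hS : S ⊆ paraboloid r) (hb : b ∈ paraboloid r) : b ∉ convexHull ℝ (S \ {b}) := by
  have hsub : convexHull ℝ (S \ {b}) ⊆ {p | tangentGap b b < tangentGap b p} :=
    convexHull_min (fun p hp => tangentGap_lt hb (hS hp.1) hp.2)
      (convex_halfSpace_gt (isLinearMap_tangentGap b) _)
  exact fun h => lt_irrefl _ (show tangentGap b b < tangentGap b b from hsub h)

end paraboloid

lemma midpoint_lift_mem_paraboloid (c c' : EuclideanSpace ℝ (Fin 2)) :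
    (1 / 2 : ℝ) • (lift c + lift c') ∈ paraboloid (dist c c' ^ 2 / 4) := by
  rw [EuclideanSpace.dist_eq, Real.sq_sqrt (by positivity), Fin.sum_univ_two,
    Real.dist_eq, Real.dist_eq, sq_abs, sq_abs]
  simp only [paraboloid, Set.mem_ofPred_eq, lift, WithLp.equiv_symm_apply, PiLp.smul_apply,
    PiLp.add_apply, Matrix.cons_val_zero, Matrix.cons_val_one, Matrix.cons_val_two,
    Matrix.head_cons, Matrix.tail_cons, smul_eq_mul]
  ring

lemma blockers_subset_paraboloid (D : Set (EuclideanSpace ℝ (Fin 2))) :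
    blockers D ⊆ paraboloid 1 := by
  rintro _ ⟨c, -, c', -, hcc', rfl⟩
  convert midpoint_lift_mem_paraboloid c c' using 2
  rw [hcc']
  norm_num

theorem blockers_convexPosition_general (D : Set (EuclideanSpace ℝ (Fin 2))) :
    ∀ b ∈ blockers D, b ∉ convexHull ℝ (blockers D \ {b}) := fun _ hb =>
  paraboloid.notMem_convexHull_diff_singleton (blockers_subset_paraboloid D)
    (blockers_subset_paraboloid D hb)

/-- For a finite `D ⊆ ℝ²` with pairwise distances at least `2`, the set `B`
of blocking points is in convex position: no blocking point lies in the convex hull of the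
remaining blocking points. -/
theorem blockers_convexPosition (D : Set (EuclideanSpace ℝ (Fin 2)))
    (hD : D.Finite) (hsep : ∀ p ∈ D, ∀ q ∈ D, p ≠ q → 2 ≤ dist p q) :
    ∀ b ∈ blockers D, b ∉ convexHull ℝ (blockers D \ {b}) :=
  blockers_convexPosition_general D
end

section
/- Let D be a finite set of points in ℝ² whose pairwise Euclidean distances are all at least 2, let L = lift(D), let B be the set of blocking points, and let P = L ∪ B. Suppose L and B are disjoint. Then a subset S ⊆ P is in convex position if and only if no point of S ∩ B lies in the convex hull of S ∩ L. -/
open Set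

local notation "ℝ²" => EuclideanSpace ℝ (Fin 2)
local notation "ℝ³" => EuclideanSpace ℝ (Fin 3)

theorem mem_convexHull_inter_preimage_of_le {𝕜 E : Type*} [Field 𝕜] [LinearOrder 𝕜]
    [IsStrictOrderedRing 𝕜] [AddCommGroup E] [Module 𝕜 E] (f : E →ᵃ[𝕜] 𝕜) {c : 𝕜} {s : Set E}
    (hs : ∀ y ∈ s, c ≤ f y) {x : E} (hx : x ∈ convexHull 𝕜 s) (hfx : f x = c) :
    x ∈ convexHull 𝕜 (s ∩ f ⁻¹' {c}) := by
  set H := convexHull 𝕜 (s ∩ f ⁻¹' {c})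
  have hH : ∀ y ∈ H, f y = c := fun y hy =>
    convexHull_min inter_subset_right ((convex_singleton c).affine_preimage f) hy
  -- `x` lies in the convex set `{c < f} ∪ H` containing `s`, and not in its first part.
  have hK : Convex 𝕜 ({y | c < f y} ∪ H) := by
    refine convex_iff_forall_pos.2 fun y hy z hz a b ha hb hab => ?_
    have hcomb : f (a • y + b • z) - c = a * (f y - c) + b * (f z - c) := by
      rw [Convex.combo_affine_apply hab]; linear_combination c * hab
    rcases hy with (hy : c < f y) | hy <;> rcases hz with (hz : c < f z) | hz
    · left; show c < _; nlinarith [mul_pos ha (sub_pos.2 hy), mul_pos hb (sub_pos.2 hz)]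
    · left; show c < _; nlinarith [mul_pos ha (sub_pos.2 hy), hH z hz]
    · left; show c < _; nlinarith [mul_pos hb (sub_pos.2 hz), hH y hy]
    · exact Or.inr (convex_convexHull 𝕜 _ hy hz ha.le hb.le hab)
  have hsK : s ⊆ {y | c < f y} ∪ H := fun y hy =>
    (hs y hy).lt_or_eq.imp id fun h => subset_convexHull 𝕜 _ ⟨hy, h.symm⟩
  exact (convexHull_min hsK hK hx).resolve_left hfx.not_gt

theorem notMem_convexHull_of_lt {𝕜 E : Type*} [Field 𝕜] [LinearOrder 𝕜]
    [IsStrictOrderedRing 𝕜] [AddCommGroup E] [Module 𝕜 E] (f : E →ᵃ[𝕜] 𝕜) {c : 𝕜} {s : Set E}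
    (hs : ∀ y ∈ s, c < f y) {x : E} (hfx : f x = c) : x ∉ convexHull 𝕜 s := fun hx =>
  let ⟨_, hy, hfy⟩ := convexHull_nonempty_iff.1
    ⟨x, mem_convexHull_inter_preimage_of_le f (fun y hy => (hs y hy).le) hx hfx⟩
  (hs _ hy).ne' hfy

lemma dist_sq_eq_fin_two (x y : ℝ²) : dist x y ^ 2 = (x 0 - y 0) ^ 2 + (x 1 - y 1) ^ 2 := by
  simp [EuclideanSpace.dist_sq_eq, Fin.sum_univ_two, Real.dist_eq, sq_abs]

/-- `y ↦ y₃ - (2⟪m, (y₁, y₂)⟫ - ‖m‖²)`: the height of `y` above the plane tangent to the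
paraboloid at `lift m`. -/
noncomputable def heightAboveTangent (m : ℝ²) : ℝ³ →ᵃ[ℝ] ℝ :=
  ((EuclideanSpace.proj 2 - (2 * m 0) • EuclideanSpace.proj 0 - (2 * m 1) • EuclideanSpace.proj 1 :
    ℝ³ →L[ℝ] ℝ) : ℝ³ →ₗ[ℝ] ℝ).toAffineMap + AffineMap.const ℝ ℝ³ (m 0 ^ 2 + m 1 ^ 2)

lemma heightAboveTangent_apply (m : ℝ²) (y : ℝ³) :
    heightAboveTangent m y = y 2 - 2 * (m 0 * y 0 + m 1 * y 1) + (m 0 ^ 2 + m 1 ^ 2) := by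
  simp [heightAboveTangent]; ring

lemma heightAboveTangent_lift_add_single (m x : ℝ²) (t : ℝ) :
    heightAboveTangent m (lift x + EuclideanSpace.single 2 t) = dist x m ^ 2 + t := by
  simp [heightAboveTangent_apply, lift, dist_sq_eq_fin_two]; ring

lemma heightAboveTangent_lift (m x : ℝ²) : heightAboveTangent m (lift x) = dist x m ^ 2 := by
  simp [heightAboveTangent_apply, lift, dist_sq_eq_fin_two]; ring

lemma half_smul_lift_add_lift (c c' : ℝ²) :
    (1 / 2 : ℝ) • (lift c + lift c') =
      lift (midpoint ℝ c c') + EuclideanSpace.single 2 ((dist c c' / 2) ^ 2) := by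
  ext i
  fin_cases i <;> simp [lift, midpoint_eq_smul_add, dist_sq_eq_fin_two, div_pow]
  ring

lemma exists_of_mem_blockers {D : Set ℝ²} {b : ℝ³} (hb : b ∈ blockers D) :
    ∃ c ∈ D, ∃ c' ∈ D, dist c c' = 2 ∧
      b = lift (midpoint ℝ c c') + EuclideanSpace.single 2 1 := by
  obtain ⟨c, hc, c', hc', hcc', rfl⟩ := hb
  exact ⟨c, hc, c', hc', hcc', by rw [half_smul_lift_add_lift, hcc']; norm_num⟩

section

variable {D : Set ℝ²} {S : Set ℝ³}

lemma lift_notMem_convexHull_sdiff (hS : S ⊆ lift '' D ∪ blockers D) (a : ℝ²) :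
    lift a ∉ convexHull ℝ (S \ {lift a}) := by
  refine notMem_convexHull_of_lt (heightAboveTangent a) (c := 0) ?_
    (by rw [heightAboveTangent_lift, dist_self]; norm_num)
  rintro y ⟨hyS, hya⟩
  rcases hS hyS with ⟨c, -, rfl⟩ | hyB
  · have hca : c ≠ a := by rintro rfl; exact hya rfl
    rw [heightAboveTangent_lift]
    exact pow_pos (dist_pos.2 hca) 2
  · obtain ⟨c, -, c', -, -, rfl⟩ := exists_of_mem_blockers hyB
    rw [heightAboveTangent_lift_add_single]
    positivity

lemma mem_convexHull_inter_lift_of_mem_convexHull_sdiff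
    (hsep : ∀ p ∈ D, ∀ q ∈ D, p ≠ q → 2 ≤ dist p q) (hS : S ⊆ lift '' D ∪ blockers D)
    {c₁ c₂ : ℝ²} (hc₁ : c₁ ∈ D) (h12 : dist c₁ c₂ = 2)
    (hp : lift (midpoint ℝ c₁ c₂) + EuclideanSpace.single 2 1 ∈
      convexHull ℝ (S \ {lift (midpoint ℝ c₁ c₂) + EuclideanSpace.single 2 1})) :
    lift (midpoint ℝ c₁ c₂) + EuclideanSpace.single 2 1 ∈ convexHull ℝ (S ∩ lift '' D) := by
  set m := midpoint ℝ c₁ c₂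
  set f := heightAboveTangent m
  have hc₁m : dist c₁ m = 1 := by simp [m, dist_left_midpoint, h12]
  have hge : ∀ y ∈ S \ {lift m + EuclideanSpace.single 2 1}, 1 ≤ f y := by
    rintro y ⟨hyS, -⟩
    rcases hS hyS with ⟨c, hc, rfl⟩ | hyB
    · have hcm : 1 ≤ dist c m := by
        rcases eq_or_ne c c₁ with rfl | hne
        · exact hc₁m.ge
        · linarith [hsep c hc c₁ hc₁ hne, dist_triangle c m c₁, dist_comm m c₁]
      rw [heightAboveTangent_lift]
      exact one_le_pow₀ hcm
    · obtain ⟨c, -, c', -, -, rfl⟩ := exists_of_mem_blockers hyB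
      rw [heightAboveTangent_lift_add_single]
      exact le_add_of_nonneg_left (sq_nonneg _)
  have hface := mem_convexHull_inter_preimage_of_le f hge hp
    (by simp [f, heightAboveTangent_lift_add_single])
  refine convexHull_mono ?_ hface
  rintro y ⟨⟨hyS, hyp⟩, hfy⟩
  refine ⟨hyS, (hS hyS).resolve_right fun hyB => hyp ?_⟩
  obtain ⟨c, -, c', -, -, rfl⟩ := exists_of_mem_blockers hyB
  have hmid : dist (midpoint ℝ c c') m = 0 := by
    simpa [f, heightAboveTangent_lift_add_single] using hfy
  rw [dist_eq_zero.1 hmid]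
  rfl

end

theorem convexPosition_iff_no_blocker_in_hull_general (D : Set (EuclideanSpace ℝ (Fin 2)))
    (hsep : ∀ p ∈ D, ∀ q ∈ D, p ≠ q → 2 ≤ dist p q)
    (hdisj : Disjoint (lift '' D) (blockers D))
    (S : Set (EuclideanSpace ℝ (Fin 3))) (hS : S ⊆ lift '' D ∪ blockers D) :
    (∀ p ∈ S, p ∉ convexHull ℝ (S \ {p})) ↔
      ∀ b ∈ S ∩ blockers D, b ∉ convexHull ℝ (S ∩ lift '' D) := by
  refine ⟨fun hconv b ⟨hbS, hbB⟩ hb => hconv b hbS (convexHull_mono ?_ hb), fun hB p hpS hp => ?_⟩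
  · exact fun y ⟨hyS, hyL⟩ => ⟨hyS, by rintro rfl; exact disjoint_left.1 hdisj hyL hbB⟩
  rcases hS hpS with ⟨a, -, rfl⟩ | hpB
  · exact lift_notMem_convexHull_sdiff hS a hp
  · obtain ⟨c₁, hc₁, c₂, -, h12, rfl⟩ := exists_of_mem_blockers hpB
    exact hB _ ⟨hpS, hpB⟩ (mem_convexHull_inter_lift_of_mem_convexHull_sdiff hsep hS hc₁ h12 hp)

/-- Let `D ⊆ ℝ²` be finite with pairwise distances at least `2`, let
`L = lift '' D`, `B` the blocking points, `P = L ∪ B`, and suppose `L` and `B` are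
disjoint. Then `S ⊆ P` is in convex position iff no point of `S ∩ B` lies in the convex
hull of `S ∩ L`. -/
theorem convexPosition_iff_no_blocker_in_hull (D : Set (EuclideanSpace ℝ (Fin 2)))
    (hD : D.Finite) (hsep : ∀ p ∈ D, ∀ q ∈ D, p ≠ q → 2 ≤ dist p q)
    (hdisj : Disjoint (lift '' D) (blockers D))
    (S : Set (EuclideanSpace ℝ (Fin 3))) (hS : S ⊆ lift '' D ∪ blockers D) :
    (∀ p ∈ S, p ∉ convexHull ℝ (S \ {p})) ↔
      ∀ b ∈ S ∩ blockers D, b ∉ convexHull ℝ (S ∩ lift '' D) :=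
  convexPosition_iff_no_blocker_in_hull_general D hsep hdisj S hS
end
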